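/- Fix integers r ≥ 3, k ≥ 1, a constant ε with 0 < ε < 1/(36 r^8), and let n be sufficiently large. Let G attain the maximum spectral radius among all non-r-partite B_{r,k}-free graphs of order n, and let V(G) = V_1 ∪ ⋯ ∪ V_r be a partition maximizing Σ_{1 ≤ i < j ≤ r} e(V_i, V_j), with uv the unique edge of G having both endpoints in the same part, u, v ∈ V_1. If N_{V_i}(u) ∩ N_{V_i}(v) ≠ ∅ for every i ∈ {2, …, r}, then N_{V_i}(u) ∪ N_{V_i}(v) = V_i for every i ∈ {2, …, r}. -/

import Mathlib

open SimpleGraph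

noncomputable section

/-- The generalized book graph `B_{r,k} = K_r ∨ kK₁`: every vertex of a complete graph
on `r` vertices is joined to every vertex of an independent set of size `k`. -/
def genBook (r k : ℕ) : SimpleGraph (Fin r ⊕ Fin k) where
  Adj x y := x ≠ y ∧ (x.isLeft = true ∨ y.isLeft = true)
  symm := ⟨fun x y h => ⟨h.1.symm, h.2.symm⟩⟩
  loopless := ⟨fun x h => h.1 rfl⟩

/-- `G` contains no subgraph isomorphic to `H` (i.e. `G` is `H`-free). -/
def IsHFree {α β : Type*} (H : SimpleGraph α) (G : SimpleGraph β) : Prop :=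
  ¬ ∃ f : α ↪ β, ∀ a b, H.Adj a b → G.Adj (f a) (f b)

open Classical in
/-- The real adjacency matrix of a graph on `Fin n`. -/
def adjMat {n : ℕ} (G : SimpleGraph (Fin n)) : Matrix (Fin n) (Fin n) ℝ :=
  Matrix.of fun i j => if G.Adj i j then (1 : ℝ) else 0

/-- The spectral radius of `G`: the largest eigenvalue of its adjacency matrix. -/
def specRad {n : ℕ} (G : SimpleGraph (Fin n)) : ℝ :=
  sSup {t : ℝ | ∃ x : Fin n → ℝ, x ≠ 0 ∧ (adjMat G).mulVec x = t • x}

/-- The number of edges of `G`. -/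
def edgeCount {n : ℕ} (G : SimpleGraph (Fin n)) : ℕ := G.edgeSet.ncard

/-- The number of edges of `G` with both endpoints in `S`. -/
def edgesIn {n : ℕ} (G : SimpleGraph (Fin n)) (S : Set (Fin n)) : ℕ :=
  {e ∈ G.edgeSet | ∀ v ∈ e, v ∈ S}.ncard

/-- Given a partition of the vertices into `r` parts (encoded by `P : Fin n → Fin r`),
the number `Σ_{1 ≤ i < j ≤ r} e(V_i, V_j)` of crossing edges: each crossing edge is
counted once, ordered so that the part index increases. -/
def crossPairs {n r : ℕ} (G : SimpleGraph (Fin n)) (P : Fin n → Fin r) : ℕ :=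
  {p : Fin n × Fin n | G.Adj p.1 p.2 ∧ P p.1 < P p.2}.ncard

/-- `P` maximizes the number of crossing edges among all partitions into `r` parts. -/
def MaxCrossPartition {n r : ℕ} (G : SimpleGraph (Fin n)) (P : Fin n → Fin r) : Prop :=
  ∀ Q : Fin n → Fin r, crossPairs G Q ≤ crossPairs G P

/-- Degree of `v` in `G`. -/
def deg {n : ℕ} (G : SimpleGraph (Fin n)) (v : Fin n) : ℕ := (G.neighborSet v).ncard

/-- Number of neighbours of `v` inside `S`. -/
def degIn {n : ℕ} (G : SimpleGraph (Fin n)) (v : Fin n) (S : Set (Fin n)) : ℕ :=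
  (G.neighborSet v ∩ S).ncard

/-- The graph `Y_r(n)`: obtained from the Turán graph `T_r(n)` (parts = residue classes
mod `r`, with `T₁` the class of `r-1`, of size `⌊n/r⌋`, and `T₂` the class of `0`, of size
`⌈n/r⌉`) by adding the edge between `u = 0` and `w = r` inside `T₂`, deleting the
`⌊n/r⌋ - 1` edges between `u` and `T₁ \ {r-1}` and the edge between `w` and `r-1`,
so that `u` and `w` have no common neighbour in `T₁`. -/
def yGraph (r n : ℕ) : SimpleGraph (Fin n) :=
  SimpleGraph.fromRel (fun a b =>
    ((a : ℕ) % r ≠ (b : ℕ) % r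
      ∧ ¬ ((a : ℕ) = 0 ∧ (b : ℕ) % r = r - 1 ∧ (b : ℕ) ≠ r - 1)
      ∧ ¬ ((b : ℕ) = 0 ∧ (a : ℕ) % r = r - 1 ∧ (a : ℕ) ≠ r - 1)
      ∧ ¬ ((a : ℕ) = r ∧ (b : ℕ) = r - 1)
      ∧ ¬ ((b : ℕ) = r ∧ (a : ℕ) = r - 1))
    ∨ ((a : ℕ) = 0 ∧ (b : ℕ) = r) ∨ ((a : ℕ) = r ∧ (b : ℕ) = 0))

/-- `G` attains the maximum spectral radius among all non-`r`-partite `B_{r,k}`-free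
graphs of order `n`. -/
def IsExtremal (r k n : ℕ) (G : SimpleGraph (Fin n)) : Prop :=
  ¬ G.Colorable r ∧ IsHFree (genBook r k) G ∧
    ∀ G' : SimpleGraph (Fin n), ¬ G'.Colorable r → IsHFree (genBook r k) G' →
      specRad G' ≤ specRad G

/-- The set `L` of vertices of small degree: `d(v) ≤ (1 - 1/r - 5√ε)n`. -/
def Lset {n : ℕ} (r : ℕ) (ε : ℝ) (G : SimpleGraph (Fin n)) : Set (Fin n) :=
  {v | (deg G v : ℝ) ≤ (1 - 1/(r : ℝ) - 5 * Real.sqrt ε) * n}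

/-- The set `W = ∪ᵢ Wᵢ` where `Wᵢ = {v ∈ Vᵢ : d_{Vᵢ}(v) ≥ 3√ε·n}`. -/
def Wset {n r : ℕ} (ε : ℝ) (G : SimpleGraph (Fin n)) (P : Fin n → Fin r) : Set (Fin n) :=
  {v | 3 * Real.sqrt ε * n ≤ (degIn G v (P ⁻¹' {P v}) : ℝ)}

end

/-!
If some `w ∈ V_i` were adjacent to neither `u` nor `v`, then `G + uw` would still be
non-`r`-partite and `B_{r,k}`-free but have larger spectral radius.

Since `uv` is the only edge inside a part, an `r`-clique avoiding `v` meets every part exactly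
once, so any vertex joined to the whole clique must be `v`. Hence in a copy of `B_{r,k}` either
`v` is a clique vertex or every page is `v`; either way every vertex of the copy is `v` or a
neighbour of `v`. A copy in `G + uw` must use the new edge and so contain `w`, which is neither.

For the spectral side, take a nonnegative eigenvector `y` for `ρ(G)`, obtained by maximising the
Rayleigh quotient and replacing the maximiser by its absolute value. If `H ≥ G` has an extra
edge `ab` with `y_b > 0`, then `ρ(H) ≥ yᵀA_H y / yᵀy ≥ ρ(G)`, and equality would make `y` an
eigenvector of `A_H` for `ρ(G)`, impossible since `(A_H y)_a ≥ ρ(G) y_a + y_b`. By extremality `y`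
is positive: if `y_u = 0` then `y` vanishes on `N(u)` and on the neighbours of `N(u)`, so joining
`u` to a vertex of positive weight creates no triangle through the new edge, hence no book.
-/

namespace Matrix

variable {ι : Type*} [Fintype ι]

theorem exists_dotProduct_mulVec_le_mul_dotProduct_self [Nonempty ι] (A : Matrix ι ι ℝ) :
    ∃ μ : ℝ, ∃ v : ι → ℝ, v ≠ 0 ∧ v ⬝ᵥ A *ᵥ v = μ * (v ⬝ᵥ v) ∧
      ∀ z, z ⬝ᵥ A *ᵥ z ≤ μ * (z ⬝ᵥ z) := by
  classical
  set S := {z : ι → ℝ | z ⬝ᵥ z = 1}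
  have hS : IsCompact S := by
    refine Metric.isCompact_of_isClosed_isBounded
      (isClosed_eq (by fun_prop) continuous_const)
      ((Metric.isBounded_closedBall (x := 0) (r := 1)).subset fun z hz => ?_)
    refine mem_closedBall_zero_iff.mpr ((pi_norm_le_iff_of_nonneg zero_le_one).mpr fun i => ?_)
    have : z i * z i ≤ z ⬝ᵥ z :=
      Finset.single_le_sum (fun j _ => mul_self_nonneg (z j)) (Finset.mem_univ i)
    rw [Real.norm_eq_abs, abs_le]
    constructor <;> nlinarith [hz.symm ▸ this]
  obtain ⟨i₀⟩ := ‹Nonempty ι›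
  obtain ⟨v, hvS, hvmax⟩ := hS.exists_isMaxOn ⟨Pi.single i₀ 1, by simp [S]⟩
    (f := fun z => z ⬝ᵥ A *ᵥ z) (by fun_prop)
  have hv : v ⬝ᵥ v = 1 := hvS
  have hv0 : v ≠ 0 := fun h => by rw [h, zero_dotProduct] at hv; exact zero_ne_one hv
  refine ⟨v ⬝ᵥ A *ᵥ v, v, hv0, by rw [hv, mul_one], fun z => ?_⟩
  rcases eq_or_ne z 0 with rfl | hz
  · simp
  have hzz : 0 < z ⬝ᵥ z := by simpa using dotProduct_star_self_pos_iff.mpr hz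
  set c := (Real.sqrt (z ⬝ᵥ z))⁻¹
  have hc : c ^ 2 * (z ⬝ᵥ z) = 1 := by
    rw [inv_pow, Real.sq_sqrt hzz.le, inv_mul_cancel₀ hzz.ne']
  have hmax : c ^ 2 * (z ⬝ᵥ A *ᵥ z) ≤ v ⬝ᵥ A *ᵥ v := by
    have := hvmax (a := c • z) <| show (c • z) ⬝ᵥ (c • z) = 1 by
      rw [dotProduct_smul, smul_dotProduct, smul_eq_mul, smul_eq_mul, ← hc]; ring
    simpa [mulVec_smul, dotProduct_smul, smul_dotProduct, sq, mul_assoc] using this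
  calc z ⬝ᵥ A *ᵥ z = c ^ 2 * (z ⬝ᵥ A *ᵥ z) * (z ⬝ᵥ z) := by
        rw [mul_right_comm, hc, one_mul]
    _ ≤ v ⬝ᵥ A *ᵥ v * (z ⬝ᵥ z) := by gcongr

theorem IsHermitian.mulVec_eq_smul_of_dotProduct_mulVec_eq {A : Matrix ι ι ℝ}
    (hA : A.IsHermitian) {μ : ℝ} (hle : ∀ z, z ⬝ᵥ A *ᵥ z ≤ μ * (z ⬝ᵥ z)) {y : ι → ℝ}
    (hy : y ⬝ᵥ A *ᵥ y = μ * (y ⬝ᵥ y)) : A *ᵥ y = μ • y := by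
  classical
  have hB : (μ • (1 : Matrix ι ι ℝ) - A).PosSemidef := by
    refine .of_dotProduct_mulVec_nonneg ?_ fun z => ?_
    · exact (isHermitian_one.smul (IsSelfAdjoint.all μ)).sub hA
    · simpa [sub_mulVec, smul_mulVec, dotProduct_sub, dotProduct_smul] using hle z
  have := (hB.dotProduct_mulVec_zero_iff y).mp
    (by simp [sub_mulVec, smul_mulVec, dotProduct_sub, hy])
  rwa [sub_mulVec, smul_mulVec, one_mulVec, sub_eq_zero, eq_comm] at this

theorem IsHermitian.exists_nonneg_eigenvector [Nonempty ι] {A : Matrix ι ι ℝ}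
    (hA : A.IsHermitian) (hA₀ : ∀ i j, 0 ≤ A i j) :
    ∃ μ : ℝ, ∃ y : ι → ℝ, 0 ≤ y ∧ y ≠ 0 ∧ A *ᵥ y = μ • y ∧
      ∀ z, z ⬝ᵥ A *ᵥ z ≤ μ * (z ⬝ᵥ z) := by
  obtain ⟨μ, v, hv0, hvμ, hle⟩ := exists_dotProduct_mulVec_le_mul_dotProduct_self A
  have habs : |v| ⬝ᵥ |v| = v ⬝ᵥ v :=
    Finset.sum_congr rfl fun i _ => abs_mul_abs_self (v i)
  have hq : v ⬝ᵥ A *ᵥ v ≤ |v| ⬝ᵥ A *ᵥ |v| := by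
    simp only [dotProduct, mulVec, Finset.mul_sum]
    refine Finset.sum_le_sum fun i _ => Finset.sum_le_sum fun j _ => ?_
    calc v i * (A i j * v j) ≤ |v i * (A i j * v j)| := le_abs_self _
      _ = |v| i * (A i j * |v| j) := by simp [abs_mul, abs_of_nonneg (hA₀ i j)]
  refine ⟨μ, |v|, abs_nonneg v, fun h => hv0 (by simpa using h), ?_, hle⟩
  exact hA.mulVec_eq_smul_of_dotProduct_mulVec_eq hle
    (le_antisymm (hle _) (by linarith [habs ▸ hvμ]))

end Matrix

open Matrix

section SpectralRadius

variable {n : ℕ}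

open Classical in
lemma adjMat_apply (G : SimpleGraph (Fin n)) (i j : Fin n) :
    adjMat G i j = if G.Adj i j then 1 else 0 := rfl

lemma adjMat_apply_of_adj {G : SimpleGraph (Fin n)} {i j : Fin n} (h : G.Adj i j) :
    adjMat G i j = 1 := by
  simp [adjMat_apply, h]

lemma adjMat_apply_of_not_adj {G : SimpleGraph (Fin n)} {i j : Fin n} (h : ¬ G.Adj i j) :
    adjMat G i j = 0 := by
  simp [adjMat_apply, h]

lemma adjMat_nonneg (G : SimpleGraph (Fin n)) (i j : Fin n) : 0 ≤ adjMat G i j := by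
  rw [adjMat_apply]; split_ifs <;> simp

lemma adjMat_mono {G H : SimpleGraph (Fin n)} (hGH : G ≤ H) (i j : Fin n) :
    adjMat G i j ≤ adjMat H i j := by
  by_cases h : G.Adj i j
  · rw [adjMat_apply_of_adj h, adjMat_apply_of_adj (hGH h)]
  · rw [adjMat_apply_of_not_adj h]; exact adjMat_nonneg H i j

lemma isHermitian_adjMat (G : SimpleGraph (Fin n)) : (adjMat G).IsHermitian := by
  ext i j
  by_cases h : G.Adj i j
  · simp [adjMat_apply_of_adj h, adjMat_apply_of_adj h.symm]
  · simp [adjMat_apply_of_not_adj h, adjMat_apply_of_not_adj (mt G.adj_symm h)]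

lemma mulVec_adjMat_mono {G H : SimpleGraph (Fin n)} (hGH : G ≤ H) {y : Fin n → ℝ}
    (hy : 0 ≤ y) : adjMat G *ᵥ y ≤ adjMat H *ᵥ y := fun i => by
  simp only [mulVec, dotProduct]
  exact Finset.sum_le_sum fun j _ => mul_le_mul_of_nonneg_right (adjMat_mono hGH i j) (hy j)

lemma mulVec_adjMat_add_le {G H : SimpleGraph (Fin n)} (hGH : G ≤ H) {a b : Fin n}
    (hab : H.Adj a b) (hnab : ¬ G.Adj a b) {y : Fin n → ℝ} (hy : 0 ≤ y) :
    (adjMat G *ᵥ y) a + y b ≤ (adjMat H *ᵥ y) a := by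
  have hdiff : (adjMat H *ᵥ y) a - (adjMat G *ᵥ y) a =
      ∑ j, (adjMat H a j - adjMat G a j) * y j := by
    simp only [mulVec, dotProduct, ← Finset.sum_sub_distrib, sub_mul]
  have := Finset.single_le_sum (f := fun j => (adjMat H a j - adjMat G a j) * y j)
    (fun j _ => mul_nonneg (sub_nonneg.mpr (adjMat_mono hGH a j)) (hy j)) (Finset.mem_univ b)
  rw [adjMat_apply_of_adj hab, adjMat_apply_of_not_adj hnab, sub_zero, one_mul, ← hdiff] at this
  linarith

theorem exists_nonneg_eigenvector_specRad [Nonempty (Fin n)] (G : SimpleGraph (Fin n)) :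
    ∃ y : Fin n → ℝ, 0 ≤ y ∧ y ≠ 0 ∧ adjMat G *ᵥ y = specRad G • y ∧
      ∀ z, z ⬝ᵥ adjMat G *ᵥ z ≤ specRad G * (z ⬝ᵥ z) := by
  obtain ⟨μ, y, hy, hy0, hyμ, hle⟩ :=
    (isHermitian_adjMat G).exists_nonneg_eigenvector (adjMat_nonneg G)
  suffices specRad G = μ by subst this; exact ⟨y, hy, hy0, hyμ, hle⟩
  refine IsGreatest.csSup_eq ⟨⟨y, hy0, hyμ⟩, ?_⟩
  rintro t ⟨x, hx0, hxt⟩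
  have hxx : 0 < x ⬝ᵥ x := by simpa using dotProduct_star_self_pos_iff.mpr hx0
  have := hle x
  rw [hxt, dotProduct_smul, smul_eq_mul] at this
  exact le_of_mul_le_mul_right this hxx

lemma eq_zero_of_adj_of_eq_zero {G : SimpleGraph (Fin n)} {y : Fin n → ℝ} (hy : 0 ≤ y)
    {ρ : ℝ} (hyρ : adjMat G *ᵥ y = ρ • y) {t s : Fin n} (ht : y t = 0) (hts : G.Adj t s) :
    y s = 0 := by
  have hsum : ∑ j, adjMat G t j * y j = 0 := by
    simpa [ht, mulVec, dotProduct] using congrFun hyρ t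
  have := (Finset.sum_eq_zero_iff_of_nonneg fun j _ =>
    mul_nonneg (adjMat_nonneg G t j) (hy j)).mp hsum s (Finset.mem_univ s)
  rwa [adjMat_apply_of_adj hts, one_mul] at this

theorem specRad_lt_of_adj_of_not_adj {G H : SimpleGraph (Fin n)} (hGH : G ≤ H) {a b : Fin n}
    (hab : H.Adj a b) (hnab : ¬ G.Adj a b) {y : Fin n → ℝ} (hy : 0 ≤ y)
    (hyρ : adjMat G *ᵥ y = specRad G • y) (hb : 0 < y b) : specRad G < specRad H := by
  have : Nonempty (Fin n) := ⟨a⟩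
  obtain ⟨-, -, -, -, hleH⟩ := exists_nonneg_eigenvector_specRad H
  have hyy : 0 < y ⬝ᵥ y := by
    simpa using dotProduct_star_self_pos_iff.mpr fun h : y = 0 => hb.ne' (by simp [h])
  have hmono : specRad G * (y ⬝ᵥ y) ≤ y ⬝ᵥ adjMat H *ᵥ y := by
    calc specRad G * (y ⬝ᵥ y) = y ⬝ᵥ adjMat G *ᵥ y := by
          rw [hyρ, dotProduct_smul, smul_eq_mul]
      _ ≤ y ⬝ᵥ adjMat H *ᵥ y :=
          dotProduct_le_dotProduct_of_nonneg_left (mulVec_adjMat_mono hGH hy) hy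
  have hle : specRad G ≤ specRad H := le_of_mul_le_mul_right (hmono.trans (hleH y)) hyy
  refine hle.lt_of_ne fun heq => ?_
  rw [heq] at hmono hyρ
  have hyH := (isHermitian_adjMat H).mulVec_eq_smul_of_dotProduct_mulVec_eq hleH
    (le_antisymm (hleH y) hmono)
  have := mulVec_adjMat_add_le hGH hab hnab hy
  rw [hyρ, hyH] at this
  linarith

end SpectralRadius

section BookFree

variable {α β : Type*}

lemma adj_of_sup_edge_adj {G : SimpleGraph β} {a b p q : β} (h : (G ⊔ edge a b).Adj p q)
    (hqa : q ≠ a) (hqb : q ≠ b) : G.Adj p q := by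
  simp only [sup_adj, edge_adj] at h
  tauto

lemma IsHFree.exists_adj_of_sup_edge {H : SimpleGraph α} {G : SimpleGraph β}
    (hG : IsHFree H G) {a b : β} {f : α ↪ β}
    (hf : ∀ x y, H.Adj x y → (G ⊔ edge a b).Adj (f x) (f y)) :
    ∃ x y, H.Adj x y ∧ f x = a ∧ f y = b := by
  by_contra! hne
  refine hG ⟨f, fun x y hxy => ?_⟩
  have h := hf x y hxy
  simp only [sup_adj, edge_adj] at h
  rcases h with h | ⟨⟨hx, hy⟩ | ⟨hx, hy⟩, -⟩
  · exact h
  · exact absurd hy (hne x y hxy hx)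
  · exact absurd hx (hne y x hxy.symm hy)

lemma isHFree_sup_edge_of_no_common_adj {H : SimpleGraph α}
    (hH : ∀ x y, H.Adj x y → ∃ z, H.Adj x z ∧ H.Adj y z) {G : SimpleGraph β}
    (hG : IsHFree H G) {a b : β} (hab : ∀ t, G.Adj a t → ¬ G.Adj b t) :
    IsHFree H (G ⊔ edge a b) := by
  rintro ⟨f, hf⟩
  obtain ⟨x, y, hxy, rfl, rfl⟩ := hG.exists_adj_of_sup_edge hf
  obtain ⟨z, hxz, hyz⟩ := hH x y hxy
  have hzx : f z ≠ f x := f.injective.ne hxz.ne'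
  have hzy : f z ≠ f y := f.injective.ne hyz.ne'
  exact hab (f z) (adj_of_sup_edge_adj (hf x z hxz) hzx hzy)
    (adj_of_sup_edge_adj (hf y z hyz) hzx hzy)

lemma genBook_exists_common_adj {r k : ℕ} (hr : 3 ≤ r) {x y : Fin r ⊕ Fin k} :
    ∃ z, (genBook r k).Adj x z ∧ (genBook r k).Adj y z := by
  obtain ⟨z, hz, hzxy⟩ := Finset.exists_mem_notMem_of_card_lt_card
    (s := {x, y}) (t := Finset.univ.map .inl) (by simpa using Finset.card_le_two.trans_lt hr)
  obtain ⟨l, -, rfl⟩ := Finset.mem_map.mp hz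
  simp only [Finset.mem_insert, Finset.mem_singleton, not_or] at hzxy
  exact ⟨.inl l, ⟨Ne.symm hzxy.1, Or.inr rfl⟩, ⟨Ne.symm hzxy.2, Or.inr rfl⟩⟩

end BookFree

section UniqueEdgeInPart

variable {β : Type*} {r : ℕ} {H : SimpleGraph β} {P : β → Fin r} {u v : β}

lemma eq_of_forall_adj_clique
    (huniq : ∀ a b, H.Adj a b → P a = P b → (a = u ∧ b = v) ∨ (a = v ∧ b = u))
    {c : Fin r → β} (hc : ∀ l l', l ≠ l' → H.Adj (c l) (c l')) (hcv : ∀ l, c l ≠ v)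
    {x : β} (hx : ∀ l, H.Adj x (c l)) : x = v := by
  have hinj : Function.Injective (P ∘ c) := fun l l' hll' => by
    by_contra hne
    rcases huniq _ _ (hc l l' hne) hll' with ⟨-, h⟩ | ⟨h, -⟩
    exacts [hcv l' h, hcv l h]
  obtain ⟨l, hl⟩ := Finite.injective_iff_surjective.mp hinj (P x)
  rcases huniq _ _ (hx l) hl.symm with ⟨-, h⟩ | ⟨h, -⟩
  exacts [absurd h (hcv l), h]

lemma eq_or_adj_of_genBook_copy {k : ℕ} (hk : 1 ≤ k)
    (huniq : ∀ a b, H.Adj a b → P a = P b → (a = u ∧ b = v) ∨ (a = v ∧ b = u))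
    {f : Fin r ⊕ Fin k ↪ β} (hf : ∀ x y, (genBook r k).Adj x y → H.Adj (f x) (f y))
    (z : Fin r ⊕ Fin k) : f z = v ∨ H.Adj v (f z) := by
  by_contra! ⟨hzv, hnadj⟩
  have hcv : ∀ l, f (.inl l) ≠ v := fun l hl => hnadj <| hl ▸
    hf _ _ ⟨fun h => hzv (h ▸ hl), Or.inl rfl⟩
  have hpage : ∀ p, f (.inr p) = v := fun p =>
    eq_of_forall_adj_clique huniq (c := fun l => f (.inl l))
      (fun l l' h => hf _ _ ⟨Sum.inl_injective.ne h, Or.inl rfl⟩) hcv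
      fun l => hf _ _ ⟨Sum.inr_ne_inl, Or.inr rfl⟩
  rcases z with l | p
  · exact hnadj (hpage ⟨0, hk⟩ ▸ hf _ _ ⟨Sum.inr_ne_inl, Or.inr rfl⟩)
  · exact hzv (hpage p)

lemma isHFree_genBook_sup_edge {k : ℕ} (hk : 1 ≤ k) {G : SimpleGraph β}
    (hG : IsHFree (genBook r k) G)
    (huniq : ∀ a b, G.Adj a b → P a = P b → (a = u ∧ b = v) ∨ (a = v ∧ b = u))
    (huv : u ≠ v) {w : β} (hwv : w ≠ v) (hPw : P w ≠ P u) (hvw : ¬ G.Adj v w) :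
    IsHFree (genBook r k) (G ⊔ edge w u) := by
  rintro ⟨f, hf⟩
  obtain ⟨x, -, -, hx, -⟩ := hG.exists_adj_of_sup_edge hf
  have huniq' : ∀ a b, (G ⊔ edge w u).Adj a b → P a = P b →
      (a = u ∧ b = v) ∨ (a = v ∧ b = u) := by
    intro a b hab hP
    simp only [sup_adj, edge_adj] at hab
    rcases hab with hab | ⟨⟨rfl, rfl⟩ | ⟨rfl, rfl⟩, -⟩
    exacts [huniq a b hab hP, absurd hP hPw, absurd hP.symm hPw]
  rcases eq_or_adj_of_genBook_copy hk huniq' hf x with h | h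
  · exact hwv (hx ▸ h)
  · rw [hx] at h
    simp only [sup_adj, edge_adj] at h
    rcases h with h | ⟨⟨h, -⟩ | ⟨h, -⟩, -⟩
    exacts [hvw h, hwv h.symm, huv h.symm]

end UniqueEdgeInPart

section Extremal

variable {r k n : ℕ} {G : SimpleGraph (Fin n)} {y : Fin n → ℝ}

lemma IsExtremal.not_isHFree_sup_edge (hG : IsExtremal r k n G) (hy : 0 ≤ y)
    (hyρ : adjMat G *ᵥ y = specRad G • y) {a b : Fin n} (hab : a ≠ b) (hnab : ¬ G.Adj a b)
    (hb : 0 < y b) : ¬ IsHFree (genBook r k) (G ⊔ edge a b) := fun hfree => by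
  have hle := hG.2.2 _ (fun hcol => hG.1 (hcol.mono_left le_sup_left)) hfree
  have hlt := specRad_lt_of_adj_of_not_adj (H := G ⊔ edge a b) le_sup_left
    (by simp [edge_adj, hab]) hnab hy hyρ hb
  linarith

lemma IsExtremal.eigenvector_pos (hr : 3 ≤ r) (hG : IsExtremal r k n G) (hy : 0 ≤ y)
    (hy0 : y ≠ 0) (hyρ : adjMat G *ᵥ y = specRad G • y) (u : Fin n) : 0 < y u := by
  refine (hy u).lt_of_ne' fun hu => ?_
  obtain ⟨c, hc⟩ := Function.ne_iff.mp hy0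
  have hc : 0 < y c := (hy c).lt_of_ne' hc
  have hzero : ∀ {t s}, y t = 0 → G.Adj t s → y s = 0 := eq_zero_of_adj_of_eq_zero hy hyρ
  refine hG.not_isHFree_sup_edge hy hyρ (fun h : u = c => hc.ne' (h ▸ hu))
    (fun h => hc.ne' (hzero hu h)) hc ?_
  exact isHFree_sup_edge_of_no_common_adj (fun _ _ _ => genBook_exists_common_adj hr) hG.2.1
    fun t hut hct => hc.ne' (hzero (hzero hu hut) hct.symm)

end Extremal

/-- let `uv` be the unique edge of `G` inside a part, with `u, v ∈ V₁`.
If `N_{Vᵢ}(u) ∩ N_{Vᵢ}(v) ≠ ∅` for every part `i ≠ 1`, then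
`N_{Vᵢ}(u) ∪ N_{Vᵢ}(v) = Vᵢ` for every such `i`. -/
theorem stmt18 (r k : ℕ) (hr : 3 ≤ r) (hk : 1 ≤ k) :
    ∃ n₀ : ℕ, ∀ n ≥ n₀, ∀ G : SimpleGraph (Fin n),
      IsExtremal r k n G →
        ∀ P : Fin n → Fin r, MaxCrossPartition G P →
          ∀ u v : Fin n, G.Adj u v →
            P u = ⟨0, by omega⟩ → P v = ⟨0, by omega⟩ →
            (∀ a b : Fin n, G.Adj a b → P a = P b →
              (a = u ∧ b = v) ∨ (a = v ∧ b = u)) →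
            (∀ i : Fin r, i ≠ P u →
              (G.neighborSet u ∩ G.neighborSet v ∩ P ⁻¹' {i}).Nonempty) →
            ∀ i : Fin r, i ≠ P u →
              (G.neighborSet u ∩ P ⁻¹' {i}) ∪ (G.neighborSet v ∩ P ⁻¹' {i})
                = P ⁻¹' {i} := by
  refine ⟨0, fun n _ G hG P _ u v huv hPu hPv huniq _ i hi => ?_⟩
  refine (Set.union_subset Set.inter_subset_right Set.inter_subset_right).antisymm
    fun w (hw : P w = i) => ?_
  by_contra! hnot
  simp only [Set.mem_union, Set.mem_inter_iff, mem_neighborSet, Set.mem_preimage,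
    Set.mem_singleton_iff, hw, and_true, not_or] at hnot
  have hPw : P w ≠ P u := hw ▸ hi
  have hwv : w ≠ v := fun h => hPw (by rw [h, hPu, hPv])
  have : Nonempty (Fin n) := ⟨u⟩
  obtain ⟨y, hy, hy0, hyρ, -⟩ := exists_nonneg_eigenvector_specRad G
  exact hG.not_isHFree_sup_edge hy hyρ (fun h => hPw (congrArg P h)) (fun h => hnot.1 h.symm)
    (hG.eigenvector_pos hr hy hy0 hyρ u)
    (isHFree_genBook_sup_edge hk hG.2.1 huniq huv.ne hwv hPw hnot.2)
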